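/- arXiv:1810.07897 — 6 statements merged into one kernel-verified Lean document; each statement's English description precedes it below -/
import Mathlib

section
/- Let m be a probability measure on 𝒳 ⊆ ℝ^p, let π, π' : 𝒳 → [0,1] be measurable, and let F₀, F₁, F₁' be distribution functions on ℝ. If there exists a real number c ≠ 1 such that π'(x) = π(x)/(1 − c) for m-almost every x and F₁'(y) = c F₀(y) + (1 − c) F₁(y) for every y ∈ ℝ, then the joint distributions P_{π,F₁} and P_{π',F₁'} are identical. -/
/-! The reparametrisation leaves the conditional distribution function of `Y` given `X = x`
unchanged: with `π' = π / (1 - c)` and `F₁' = c F₀ + (1 - c) F₁`,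
`π' F₁' + (1 - π') F₀ = π F₁ + (1 - π) F₀` pointwise, so the integrals over every rectangle
agree. -/

open MeasureTheory ProbabilityTheory

noncomputable section

/-- `F` is a distribution function on `ℝ`: nondecreasing, right-continuous,
with limits `0` at `-∞` and `1` at `+∞`. -/
def IsDistFun (F : ℝ → ℝ) : Prop :=
  Monotone F ∧ (∀ y : ℝ, ContinuousWithinAt F (Set.Ici y) y) ∧
    Filter.Tendsto F Filter.atBot (nhds 0) ∧ Filter.Tendsto F Filter.atTop (nhds 1)

/-- Equality of the joint distributions `P_{π₁,F₁}` and `P_{π₂,F₂}` of `(X, Y)` in the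
covariate-dependent two-groups model with covariate distribution `m` and null distribution
function `F0`: the measures of all rectangles `A × (-∞, y]` agree. -/
def JointEq {α : Type*} [MeasurableSpace α] (m : Measure α)
    (F0 : ℝ → ℝ) (π₁ : α → ℝ) (F₁ : ℝ → ℝ) (π₂ : α → ℝ) (F₂ : ℝ → ℝ) : Prop :=
  ∀ A : Set α, MeasurableSet A → ∀ y : ℝ,
    ∫ x in A, (π₁ x * F₁ y + (1 - π₁ x) * F0 y) ∂m
      = ∫ x in A, (π₂ x * F₂ y + (1 - π₂ x) * F0 y) ∂m

theorem mixture_eq_of_reparam {a a' u v v' c : ℝ} (hc : c ≠ 1) (ha : a' = a / (1 - c))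
    (hv : v' = c * u + (1 - c) * v) :
    a * v + (1 - a) * u = a' * v' + (1 - a') * u := by
  have hc' : 1 - c ≠ 0 := sub_ne_zero.mpr hc.symm
  subst ha hv
  field_simp
  ring

theorem JointEq.of_ae_mixture_eq {α : Type*} [MeasurableSpace α] {m : Measure α}
    {π₁ π₂ : α → ℝ} {F0 F₁ F₂ : ℝ → ℝ}
    (h : ∀ y, ∀ᵐ x ∂m, π₁ x * F₁ y + (1 - π₁ x) * F0 y = π₂ x * F₂ y + (1 - π₂ x) * F0 y) :
    JointEq m F0 π₁ F₁ π₂ F₂ :=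
  fun _ _ y => integral_congr_ae (ae_restrict_of_ae (h y))

theorem stmt_0_general {p : ℕ} (m : Measure (EuclideanSpace ℝ (Fin p)))
    (π π' : EuclideanSpace ℝ (Fin p) → ℝ)
    (F0 F1 F1' : ℝ → ℝ)
    (c : ℝ) (hc : c ≠ 1)
    (h1 : ∀ᵐ x ∂m, π' x = π x / (1 - c))
    (h2 : ∀ y : ℝ, F1' y = c * F0 y + (1 - c) * F1 y) :
    JointEq m F0 π F1 π' F1' :=
  JointEq.of_ae_mixture_eq fun y => h1.mono fun _ hx => mixture_eq_of_reparam hc hx (h2 y)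

/-- Lemma `lem:bid`, part (b) ⇒ (a): if there is `c ≠ 1` with
`π' = π/(1-c)` `m`-a.e. and `F₁' = c F₀ + (1-c) F₁` everywhere, then the joint
distributions `P_{π,F₁}` and `P_{π',F₁'}` coincide. -/
theorem stmt_0 {p : ℕ} (m : Measure (EuclideanSpace ℝ (Fin p))) (hm : IsProbabilityMeasure m)
    (π π' : EuclideanSpace ℝ (Fin p) → ℝ) (hπ : Measurable π) (hπ' : Measurable π')
    (hπ01 : ∀ x, π x ∈ Set.Icc (0:ℝ) 1) (hπ'01 : ∀ x, π' x ∈ Set.Icc (0:ℝ) 1)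
    (F0 F1 F1' : ℝ → ℝ) (hF0 : IsDistFun F0) (hF1 : IsDistFun F1) (hF1' : IsDistFun F1')
    (c : ℝ) (hc : c ≠ 1)
    (h1 : ∀ᵐ x ∂m, π' x = π x / (1 - c))
    (h2 : ∀ y : ℝ, F1' y = c * F0 y + (1 - c) * F1 y) :
    JointEq m F0 π F1 π' F1' :=
  stmt_0_general m π π' F0 F1 F1' c hc h1 h2

end
end

section
/- Let m be a probability measure on 𝒳 ⊆ ℝ^p, let π, π' : 𝒳 → [0,1] be measurable, and let F₀, F₁, F₁' be distribution functions on ℝ. Suppose P_{π,F₁} = P_{π',F₁'}, F₀ ≠ F₁, and m({x : π(x) > 0}) > 0. Then there exists a real number c ≠ 1 such that π'(x) = π(x)/(1 − c) for m-almost every x and F₁'(y) = c F₀(y) + (1 − c) F₁(y) for every y ∈ ℝ. -/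
open MeasureTheory ProbabilityTheory

noncomputable section

/-!
Writing `a = ∫ π dm`, `a' = ∫ π' dm` and `d(y) = F₁ y - F₀ y`, equality of the joint laws on a
rectangle `A × (-∞, y]` reads `(∫_A π) d(y) = (∫_A π') d'(y)`. Taking `A = univ` gives
`d' = (a / a') d` with `a > 0`; then at a point `y₀` with `d(y₀) ≠ 0` it gives
`∫_A π' = (a' / a) ∫_A π` for every `A`, so `π' = π / (a / a')` a.e. The constant is
`c = 1 - a / a'`.
-/

section TwoGroups

variable {α : Type*} [MeasurableSpace α] {m : Measure α}

lemma integrable_of_mem_Icc [IsFiniteMeasure m] {f : α → ℝ} (hf : Measurable f)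
    (h01 : ∀ x, f x ∈ Set.Icc (0 : ℝ) 1) : Integrable f m :=
  Integrable.of_bound hf.aestronglyMeasurable 1 <| .of_forall fun x =>
    abs_le.mpr ⟨by linarith [(h01 x).1], (h01 x).2⟩

lemma setIntegral_mul_add_one_sub_mul [IsFiniteMeasure m] {f : α → ℝ} (hf : Integrable f m)
    (A : Set α) (u v : ℝ) :
    ∫ x in A, (f x * u + (1 - f x) * v) ∂m = (∫ x in A, f x ∂m) * (u - v) + m.real A * v := by
  have hrw : ∀ x, f x * u + (1 - f x) * v = f x * (u - v) + v := fun x => by ring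
  simp only [hrw]
  rw [integral_add (hf.restrict.mul_const _) (integrable_const v), integral_mul_const,
    setIntegral_const, smul_eq_mul]

namespace JointEq

variable [IsFiniteMeasure m] {F0 F₁ F₂ : ℝ → ℝ} {π₁ π₂ : α → ℝ}
  (h : JointEq m F0 π₁ F₁ π₂ F₂) (h₁ : Integrable π₁ m) (h₂ : Integrable π₂ m)
include h h₁ h₂

lemma setIntegral_mul_sub_eq {A : Set α} (hA : MeasurableSet A) (y : ℝ) :
    (∫ x in A, π₁ x ∂m) * (F₁ y - F0 y) = (∫ x in A, π₂ x ∂m) * (F₂ y - F0 y) := by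
  have hAy := h A hA y
  rw [setIntegral_mul_add_one_sub_mul h₁, setIntegral_mul_add_one_sub_mul h₂] at hAy
  linarith

lemma integral_mul_sub_eq (y : ℝ) :
    (∫ x, π₁ x ∂m) * (F₁ y - F0 y) = (∫ x, π₂ x ∂m) * (F₂ y - F0 y) := by
  simpa only [setIntegral_univ] using h.setIntegral_mul_sub_eq h₁ h₂ MeasurableSet.univ y

lemma integral_ne_zero (hπ₁ : ∫ x, π₁ x ∂m ≠ 0) (hF : F0 ≠ F₁) : ∫ x, π₂ x ∂m ≠ 0 := by
  obtain ⟨y, hy⟩ := Function.ne_iff.mp hF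
  intro h0
  have hy' := h.integral_mul_sub_eq h₁ h₂ y
  rw [h0, zero_mul] at hy'
  exact mul_ne_zero hπ₁ (sub_ne_zero.mpr hy.symm) hy'

lemma sub_eq_ratio_mul_sub (hπ₁ : ∫ x, π₁ x ∂m ≠ 0) (hF : F0 ≠ F₁) (y : ℝ) :
    F₂ y - F0 y = (∫ x, π₁ x ∂m) / (∫ x, π₂ x ∂m) * (F₁ y - F0 y) := by
  rw [div_mul_eq_mul_div, eq_div_iff (h.integral_ne_zero h₁ h₂ hπ₁ hF),
    h.integral_mul_sub_eq h₁ h₂ y, mul_comm]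

lemma setIntegral_eq_ratio_mul (hπ₁ : ∫ x, π₁ x ∂m ≠ 0) (hF : F0 ≠ F₁)
    {A : Set α} (hA : MeasurableSet A) :
    ∫ x in A, π₁ x ∂m = (∫ x, π₁ x ∂m) / (∫ x, π₂ x ∂m) * ∫ x in A, π₂ x ∂m := by
  obtain ⟨y, hy⟩ := Function.ne_iff.mp hF
  have hAy := h.setIntegral_mul_sub_eq h₁ h₂ hA y
  rw [h.sub_eq_ratio_mul_sub h₁ h₂ hπ₁ hF y] at hAy
  refine mul_right_cancel₀ (sub_ne_zero.mpr hy.symm) ?_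
  linear_combination hAy

lemma ae_eq_div_ratio (hπ₁ : ∫ x, π₁ x ∂m ≠ 0) (hF : F0 ≠ F₁) :
    π₂ =ᵐ[m] fun x => π₁ x / ((∫ x, π₁ x ∂m) / (∫ x, π₂ x ∂m)) := by
  have hr : (∫ x, π₁ x ∂m) / (∫ x, π₂ x ∂m) ≠ 0 :=
    div_ne_zero hπ₁ (h.integral_ne_zero h₁ h₂ hπ₁ hF)
  refine ae_eq_of_forall_setIntegral_eq_of_sigmaFinite (fun _ _ _ => h₂.integrableOn)
    (fun _ _ _ => (h₁.div_const _).integrableOn) fun A hA _ => ?_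
  rw [integral_div, h.setIntegral_eq_ratio_mul h₁ h₂ hπ₁ hF hA, mul_div_cancel_left₀ _ hr]

end JointEq

end TwoGroups

theorem stmt_1_general {p : ℕ} (m : Measure (EuclideanSpace ℝ (Fin p))) (hm : IsProbabilityMeasure m)
    (π π' : EuclideanSpace ℝ (Fin p) → ℝ) (hπ : Measurable π) (hπ' : Measurable π')
    (hπ01 : ∀ x, π x ∈ Set.Icc (0:ℝ) 1) (hπ'01 : ∀ x, π' x ∈ Set.Icc (0:ℝ) 1)
    (F0 F1 F1' : ℝ → ℝ) (heq : JointEq m F0 π F1 π' F1')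
    (hF01 : F0 ≠ F1)
    (hpos : 0 < m {x | 0 < π x}) :
    ∃ c : ℝ, c ≠ 1 ∧ (∀ᵐ x ∂m, π' x = π x / (1 - c)) ∧
      ∀ y : ℝ, F1' y = c * F0 y + (1 - c) * F1 y := by
  have := hm
  have hint : Integrable π m := integrable_of_mem_Icc hπ hπ01
  have hint' : Integrable π' m := integrable_of_mem_Icc hπ' hπ'01
  have ha : ∫ x, π x ∂m ≠ 0 := by
    refine ((integral_pos_iff_support_of_nonneg (fun x => (hπ01 x).1) hint).mpr ?_).ne'
    exact hpos.trans_le (measure_mono fun x hx => hx.ne')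
  refine ⟨1 - (∫ x, π x ∂m) / (∫ x, π' x ∂m), ?_, ?_, fun y => ?_⟩
  · simpa using div_ne_zero ha (heq.integral_ne_zero hint hint' ha hF01)
  · rw [sub_sub_cancel]
    exact heq.ae_eq_div_ratio hint hint' ha hF01
  · linear_combination heq.sub_eq_ratio_mul_sub hint hint' ha hF01 y

/-- Lemma `lem:bid`, part (a) ⇒ (b): if the joint distributions
`P_{π,F₁}` and `P_{π',F₁'}` coincide, `F₀ ≠ F₁`, and `π > 0` with positive `m`-probability,
then there is a real `c ≠ 1` with `π' = π/(1-c)` `m`-a.e. and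
`F₁' = c F₀ + (1-c) F₁` everywhere. -/
theorem stmt_1 {p : ℕ} (m : Measure (EuclideanSpace ℝ (Fin p))) (hm : IsProbabilityMeasure m)
    (π π' : EuclideanSpace ℝ (Fin p) → ℝ) (hπ : Measurable π) (hπ' : Measurable π')
    (hπ01 : ∀ x, π x ∈ Set.Icc (0:ℝ) 1) (hπ'01 : ∀ x, π' x ∈ Set.Icc (0:ℝ) 1)
    (F0 F1 F1' : ℝ → ℝ) (hF0 : IsDistFun F0) (hF1 : IsDistFun F1) (hF1' : IsDistFun F1')
    (heq : JointEq m F0 π F1 π' F1')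
    (hF01 : F0 ≠ F1)
    (hpos : 0 < m {x | 0 < π x}) :
    ∃ c : ℝ, c ≠ 1 ∧ (∀ᵐ x ∂m, π' x = π x / (1 - c)) ∧
      ∀ y : ℝ, F1' y = c * F0 y + (1 - c) * F1 y :=
  stmt_1_general m hm π π' hπ hπ' hπ01 hπ'01 F0 F1 F1' heq hF01 hpos
end
end

section
/- Let 𝒳 be a subinterval of ℝ with probability measure m, let F₀ be the Uniform(0,1) distribution function, let F₁* ∈ ℱ_↓, and let π* : 𝒳 → [0,1] be nondecreasing with π*(x) ≤ δ for m-almost every x, for some δ < 1. For every c ∈ (0, 1 − δ], setting π'(x) := π*(x)/(1 − c) and F₁'(y) := c F₀(y) + (1 − c) F₁*(y), one has that π' is nondecreasing with values in [0,1], F₁' ∈ ℱ_↓, and P_{π',F₁'} = P_{π*,F₁*}. Hence the model with Π the class of nondecreasing functions from 𝒳 into [0,1] and ℱ = ℱ_↓ is not identifiable at (π*, F₁*). -/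
/-!
Mixing a fraction `c` of the uniform null density into a nonincreasing density on `[0,1]`
keeps it nonincreasing, and dividing `π*` by `1 - c` exactly compensates:
`π/(1-c) · (cF₀ + (1-c)F₁) + (1 - π/(1-c)) F₀ = π F₁ + (1 - π) F₀`.
The bound `π* ≤ δ ≤ 1 - c` keeps `π*/(1-c)` in `[0,1]`.
-/

open MeasureTheory ProbabilityTheory

noncomputable section

/-- `F` belongs to the class `ℱ_↓` of distribution functions having a nonincreasing
density on `[0,1]` (and vanishing outside `[0,1]`). -/
def IsDecDensityDF (F : ℝ → ℝ) : Prop :=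
  ∃ f : ℝ → ℝ, (∀ x, 0 ≤ f x) ∧ AntitoneOn f (Set.Icc 0 1) ∧
    (∀ x, x ∉ Set.Icc (0:ℝ) 1 → f x = 0) ∧ (∫ t, f t = 1) ∧
    ∀ y : ℝ, F y = ∫ t in Set.Iic y, f t

/-- The `Uniform(0,1)` distribution function. -/
def unifDF (y : ℝ) : ℝ := max 0 (min y 1)

lemma setIntegral_Iic_indicator_Icc_one (y : ℝ) :
    ∫ t in Set.Iic y, (Set.Icc (0:ℝ) 1).indicator 1 t = unifDF y := by
  rw [setIntegral_indicator measurableSet_Icc, ← Set.Ici_inter_Iic, Set.inter_left_comm,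
    Set.Iic_inter_Iic, Set.Ici_inter_Iic]
  simp [unifDF, max_comm]

lemma isDecDensityDF_unifDF : IsDecDensityDF unifDF := by
  refine ⟨(Set.Icc (0:ℝ) 1).indicator 1, Set.indicator_nonneg fun _ _ => zero_le_one,
    fun x hx y hy _ => ?_, fun x hx => Set.indicator_of_notMem hx 1, ?_,
    fun y => (setIntegral_Iic_indicator_Icc_one y).symm⟩
  · simp [Set.indicator_of_mem hx, Set.indicator_of_mem hy]
  · simp [integral_indicator_one measurableSet_Icc]

lemma convex_setOf_isDecDensityDF : Convex ℝ {F : ℝ → ℝ | IsDecDensityDF F} := by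
  rintro F ⟨f, hf0, hfa, hfz, hfi, hfF⟩ G ⟨g, hg0, hga, hgz, hgi, hgF⟩ a b ha hb hab
  have hfint : Integrable f := .of_integral_ne_zero (by simp [hfi])
  have hgint : Integrable g := .of_integral_ne_zero (by simp [hgi])
  refine ⟨fun t => a * f t + b * g t, fun t => by have := hf0 t; have := hg0 t; positivity,
    fun x hx y hy hxy => ?_, fun x hx => by simp [hfz x hx, hgz x hx], ?_, fun y => ?_⟩
  · exact add_le_add (mul_le_mul_of_nonneg_left (hfa hx hy hxy) ha)
      (mul_le_mul_of_nonneg_left (hga hx hy hxy) hb)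
  · rw [integral_add (hfint.const_mul a) (hgint.const_mul b), integral_const_mul,
      integral_const_mul, hfi, hgi, mul_one, mul_one, hab]
  · rw [Pi.add_apply, Pi.smul_apply, Pi.smul_apply, smul_eq_mul, smul_eq_mul, hfF, hgF,
      integral_add (hfint.integrableOn.const_mul a) (hgint.integrableOn.const_mul b),
      integral_const_mul, integral_const_mul]

-- At `c = 1` the junk value `p / 0 = 0` leaves the identity true only for `p = 0`.
lemma mul_add_one_sub_mul_rescale {p c a b : ℝ} (hp : 1 - c ≠ 0 ∨ p = 0) :
    p / (1 - c) * (c * a + (1 - c) * b) + (1 - p / (1 - c)) * a = p * b + (1 - p) * a := by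
  rcases hp with hc | rfl
  · field_simp
    ring
  · simp

lemma jointEq_rescale {α : Type*} [MeasurableSpace α] {m : Measure α} {F0 F1 : ℝ → ℝ}
    {π : α → ℝ} {c : ℝ} (hπ : ∀ᵐ x ∂m, π x ∈ Set.Icc 0 (1 - c)) :
    JointEq m F0 π F1 (fun x => π x / (1 - c)) (fun y => c * F0 y + (1 - c) * F1 y) := by
  intro A _ y
  refine (integral_congr_ae (ae_restrict_of_ae ?_)).symm
  filter_upwards [hπ] with x hx
  refine mul_add_one_sub_mul_rescale ?_
  rcases eq_or_ne (1 - c) 0 with h | h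
  · exact .inr (le_antisymm (h ▸ hx.2) hx.1)
  · exact .inl h

theorem stmt_3_general (𝒳 : Set ℝ) (h𝒳 : 𝒳.OrdConnected) (m : Measure ℝ)
    (hm : IsProbabilityMeasure m) (hm𝒳 : m 𝒳 = 1)
    (F1star : ℝ → ℝ) (hF1 : IsDecDensityDF F1star)
    (πstar : ℝ → ℝ) (hmono : MonotoneOn πstar 𝒳)
    (h01 : ∀ x ∈ 𝒳, πstar x ∈ Set.Icc (0:ℝ) 1)
    (δ : ℝ) (hδae : ∀ᵐ x ∂m, πstar x ≤ δ)
    (c : ℝ) (hc : c ∈ Set.Ioc (0:ℝ) (1 - δ)) :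
    MonotoneOn (fun x => πstar x / (1 - c)) 𝒳 ∧
    (∀ᵐ x ∂m, πstar x / (1 - c) ∈ Set.Icc (0:ℝ) 1) ∧
    IsDecDensityDF (fun y => c * unifDF y + (1 - c) * F1star y) ∧
    JointEq m unifDF πstar F1star
      (fun x => πstar x / (1 - c)) (fun y => c * unifDF y + (1 - c) * F1star y) := by
  have := hm
  have h𝒳ae : ∀ᵐ x ∂m, x ∈ 𝒳 :=
    (ae_mem_iff_measure_eq h𝒳.measurableSet.nullMeasurableSet).2 (by rw [hm𝒳, measure_univ])
  have hπ : ∀ᵐ x ∂m, πstar x ∈ Set.Icc 0 (1 - c) := by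
    filter_upwards [h𝒳ae, hδae] with x hx hxδ
    exact ⟨(h01 x hx).1, hxδ.trans (by linarith [hc.2])⟩
  have hc1 : 0 ≤ 1 - c := by
    obtain ⟨x, hx⟩ := hπ.exists
    exact hx.1.trans hx.2
  refine ⟨fun a ha b hb hab => div_le_div_of_nonneg_right (hmono ha hb hab) hc1, ?_, ?_,
    jointEq_rescale hπ⟩
  · filter_upwards [hπ] with x hx
    exact ⟨div_nonneg hx.1 hc1, div_le_one_of_le₀ hx.2 hc1⟩
  · exact convex_setOf_isDecDensityDF isDecDensityDF_unifDF hF1 hc.1.le hc1 (by ring)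

/-- non-identifiability of the covariate model with nondecreasing mixing
function class and `ℱ = ℱ_↓`.  If `π* : 𝒳 → [0,1]` is nondecreasing with `π* ≤ δ < 1`
`m`-a.e., `F₀ = Uniform(0,1)`, `F₁* ∈ ℱ_↓`, then for any `c ∈ (0, 1-δ]` the pair
`(π*/(1-c), cF₀ + (1-c)F₁*)` again lies in the model class and yields the same joint
distribution. -/
theorem stmt_3 (𝒳 : Set ℝ) (h𝒳 : 𝒳.OrdConnected) (m : Measure ℝ)
    (hm : IsProbabilityMeasure m) (hm𝒳 : m 𝒳 = 1)
    (F1star : ℝ → ℝ) (hF1 : IsDecDensityDF F1star)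
    (πstar : ℝ → ℝ) (hmono : MonotoneOn πstar 𝒳)
    (h01 : ∀ x ∈ 𝒳, πstar x ∈ Set.Icc (0:ℝ) 1)
    (δ : ℝ) (hδ : δ < 1) (hδae : ∀ᵐ x ∂m, πstar x ≤ δ)
    (c : ℝ) (hc : c ∈ Set.Ioc (0:ℝ) (1 - δ)) :
    MonotoneOn (fun x => πstar x / (1 - c)) 𝒳 ∧
    (∀ᵐ x ∂m, πstar x / (1 - c) ∈ Set.Icc (0:ℝ) 1) ∧
    IsDecDensityDF (fun y => c * unifDF y + (1 - c) * F1star y) ∧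
    JointEq m unifDF πstar F1star
      (fun x => πstar x / (1 - c)) (fun y => c * unifDF y + (1 - c) * F1star y) :=
  stmt_3_general 𝒳 h𝒳 m hm hm𝒳 F1star hF1 πstar hmono h01 δ hδae c hc

end
end

section
/- Consider the covariate-dependent two-groups model on 𝒳 ⊆ ℝ^p with covariate distribution m, with Π the logistic class {x ↦ (1 + exp(−β₀ − βᵀx))⁻¹ : β₀ ∈ ℝ, β ∈ ℝ^p} and ℱ equal to either ℱ_Gauss or ℱ_↓. Suppose 𝒳 contains a non-empty open subset 𝒳' of ℝ^p such that m assigns strictly positive probability to every open ball contained in 𝒳'. Suppose F₀ ≠ F₁*, F₁* ∈ ℱ, and π*(x) = (1 + exp(−β₀* − (β*)ᵀx))⁻¹ with β* ≠ 0. Then P_{(π*, F₁*)} is identifiable: if P_{(π*,F₁*)} = P_{(π,F₁)} for some π ∈ Π and F₁ ∈ ℱ, then π(x) = π*(x) for m-almost every x and F₁ = F₁*. -/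
/-!
Integrating the model over arbitrary measurable sets shows that, for every `y`,
`π*(x) (F₁*(y) - F₀(y)) = π(x) (F₁(y) - F₀(y))` for `m`-a.e. `x`; by continuity and since `m`
charges every ball in `𝒳'`, this holds at every point of `𝒳'`. Choosing `y₀` with
`F₁*(y₀) ≠ F₀(y₀)` gives `c* π* = c π` on `𝒳'` with `c* ≠ 0`. Along the line `x₀ + s β*` the
reciprocals `1/π*` and `1/π` are of the form `1 + Q vˢ` and `1 + P uˢ` with `v ≠ 1`, and
comparing three equally spaced points forces `u = v`, `c Q = c* P` and then `c = c*`. Hence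
`π = π*` on `𝒳'` and `m`-a.e., and evaluating at one point of `𝒳'` gives `F₁ = F₁*`.
-/

open MeasureTheory ProbabilityTheory

noncomputable section

/-- The standard normal distribution function `Φ`. -/
def stdNormalCDF (y : ℝ) : ℝ := ((gaussianReal 0 1) (Set.Iic y)).toReal

/-- `F` belongs to the class `ℱ_Gauss` of Gaussian location mixtures:
`F(y) = ∫ Φ(y - u) dG(u)` for some probability measure `G` on `ℝ`. -/
def IsGaussMixCDF (F : ℝ → ℝ) : Prop :=
  ∃ G : Measure ℝ, IsProbabilityMeasure G ∧ ∀ y : ℝ, F y = ∫ u, stdNormalCDF (y - u) ∂G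

open scoped RealInnerProductSpace

theorem JointEq.ae_mul_sub_eq {α : Type*} [MeasurableSpace α] {m : Measure α} [IsFiniteMeasure m]
    {F0 F₁ F₂ : ℝ → ℝ} {q₁ q₂ : α → ℝ} (h : JointEq m F0 q₁ F₁ q₂ F₂)
    (h₁ : Integrable q₁ m) (h₂ : Integrable q₂ m) (y : ℝ) :
    ∀ᵐ x ∂m, q₁ x * (F₁ y - F0 y) = q₂ x * (F₂ y - F0 y) := by
  have hint : ∀ {q : α → ℝ} (F : ℝ → ℝ), Integrable q m →
      Integrable (fun x => q x * F y + (1 - q x) * F0 y) m := fun F hq =>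
    (hq.mul_const _).add ((integrable_const 1).sub hq |>.mul_const _)
  have hae := ae_eq_of_forall_setIntegral_eq_of_sigmaFinite
    (fun s _ _ => (hint F₁ h₁).integrableOn) (fun s _ _ => (hint F₂ h₂).integrableOn)
    (fun s hs _ => h s hs y)
  filter_upwards [hae] with x hx
  linear_combination hx

theorem eqOn_of_ae_eq_of_measure_ball_pos {X Y : Type*} [PseudoMetricSpace X]
    [MeasurableSpace X] [TopologicalSpace Y] [T2Space Y] {m : Measure X} {U : Set X}
    (hU : IsOpen U)
    (hm : ∀ (z : X) (r : ℝ), 0 < r → Metric.ball z r ⊆ U → 0 < m (Metric.ball z r))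
    {f g : X → Y} (hf : Continuous f) (hg : Continuous g) (hfg : f =ᵐ[m] g) :
    Set.EqOn f g U := by
  intro x hxU
  by_contra hx
  obtain ⟨r, hr, hball⟩ :=
    Metric.isOpen_iff.mp ((isClosed_eq hf hg).isOpen_compl.inter hU) x ⟨hx, hxU⟩
  have hnull : m (Metric.ball x r) = 0 :=
    measure_mono_null (fun z hz => (hball hz).1) (ae_iff.mp hfg)
  exact (hm x r hr (hball.trans Set.inter_subset_right)).ne' hnull

theorem eq_of_mul_one_add_geom_eq {a b P Q u v : ℝ} (hb : b ≠ 0) (hQ : Q ≠ 0) (hv : v ≠ 1)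
    (h₀ : a * (1 + P) = b * (1 + Q)) (h₁ : a * (1 + P * u) = b * (1 + Q * v))
    (h₂ : a * (1 + P * u ^ 2) = b * (1 + Q * v ^ 2)) : a = b := by
  have hv' : v - 1 ≠ 0 := sub_ne_zero.mpr hv
  have huv : u = v := by
    have : b * Q * (v - 1) * (u - v) = 0 := by linear_combination h₂ - (1 + u) * h₁ + u * h₀
    simpa [hb, hQ, hv', sub_eq_zero] using this
  have hPQ : a * P = b * Q := by
    subst huv
    exact mul_right_cancel₀ hv' (by linear_combination h₁ - h₀)
  linear_combination h₀ - hPQ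

namespace Real

theorem integrable_sigmoid_comp {α : Type*} [MeasurableSpace α] {μ : Measure α}
    [IsFiniteMeasure μ] {f : α → ℝ} (hf : AEMeasurable f μ) :
    Integrable (fun x => sigmoid (f x)) μ :=
  Integrable.of_bound (continuous_sigmoid.measurable.comp_aemeasurable hf).aestronglyMeasurable 1
    (ae_of_all _ fun x => by
      rw [norm_eq_abs, abs_of_pos (sigmoid_pos _)]
      exact sigmoid_le_one _)

theorem mul_sigmoid_eq_mul_sigmoid_iff {a b x y : ℝ} :
    a * sigmoid x = b * sigmoid y ↔ a * (1 + exp (-y)) = b * (1 + exp (-x)) := by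
  have hx : 1 + exp (-x) ≠ 0 := by positivity
  have hy : 1 + exp (-y) ≠ 0 := by positivity
  rw [sigmoid_def, sigmoid_def, ← div_eq_mul_inv, ← div_eq_mul_inv, div_eq_div_iff hx hy]

theorem eq_of_mul_sigmoid_affine_eq {a b A B s t : ℝ} (ha : a ≠ 0) (hs : s ≠ 0)
    (h : ∀ k : ℕ, k ≤ 2 → a * sigmoid (A + k * s) = b * sigmoid (B + k * t)) : a = b := by
  have hb : b ≠ 0 := by
    rintro rfl
    simpa [ha, (sigmoid_pos _).ne'] using h 0 (Nat.zero_le 2)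
  have hgeom : ∀ k : ℕ, k ≤ 2 →
      a * (1 + exp (-B) * exp (-t) ^ k) = b * (1 + exp (-A) * exp (-s) ^ k) := by
    intro k hk
    have := mul_sigmoid_eq_mul_sigmoid_iff.mp (h k hk)
    rwa [neg_add, neg_add, exp_add, exp_add, ← mul_neg, ← mul_neg, exp_nat_mul, exp_nat_mul]
      at this
  refine eq_of_mul_one_add_geom_eq hb (exp_pos _).ne' ?_ (by simpa using hgeom 0 (by norm_num))
    (by simpa using hgeom 1 (by norm_num)) (hgeom 2 le_rfl)
  rw [Ne, exp_eq_one_iff, neg_eq_zero]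
  exact hs

theorem eq_of_mul_sigmoid_inner_eqOn {E : Type*} [NormedAddCommGroup E] [InnerProductSpace ℝ E]
    {U : Set E} (hU : IsOpen U) (hUne : U.Nonempty) {a b α₀ β₀ : ℝ} {α β : E} (ha : a ≠ 0)
    (hβ : β ≠ 0) (h : ∀ x ∈ U, a * sigmoid (β₀ + ⟪β, x⟫) = b * sigmoid (α₀ + ⟪α, x⟫)) :
    a = b := by
  obtain ⟨x₀, hx₀⟩ := hUne
  have hline : IsOpen ((fun c : ℝ => x₀ + c • β) ⁻¹' U) := hU.preimage (by fun_prop)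
  obtain ⟨ε, hε, hball⟩ := Metric.isOpen_iff.mp hline 0 (by simpa using hx₀)
  refine eq_of_mul_sigmoid_affine_eq (A := β₀ + ⟪β, x₀⟫) (B := α₀ + ⟪α, x₀⟫)
    (s := ε / 3 * ‖β‖ ^ 2) (t := ε / 3 * ⟪α, β⟫) ha (by positivity) fun k hk => ?_
  have hk' : (k : ℝ) ≤ 2 := by exact_mod_cast hk
  have hmem : x₀ + (k * (ε / 3)) • β ∈ U := hball <| by
    rw [Metric.mem_ball, dist_0_eq_abs, abs_of_nonneg (by positivity)]
    nlinarith
  convert h _ hmem using 3 <;>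
    simp only [inner_add_right, inner_smul_right, real_inner_self_eq_norm_sq] <;> ring

end Real

theorem EuclideanSpace.sum_mul_eq_inner {p : ℕ} (β x : EuclideanSpace ℝ (Fin p)) :
    ∑ i, β i * x i = ⟪β, x⟫ := by
  simp [PiLp.inner_apply, mul_comm]

theorem stmt_4_general {p : ℕ} (m : Measure (EuclideanSpace ℝ (Fin p)))
    (hm : IsProbabilityMeasure m)
    (𝒳' : Set (EuclideanSpace ℝ (Fin p))) (h𝒳ne : 𝒳'.Nonempty) (h𝒳open : IsOpen 𝒳')
    (hmball : ∀ (z : EuclideanSpace ℝ (Fin p)) (r : ℝ), 0 < r →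
      Metric.ball z r ⊆ 𝒳' → 0 < m (Metric.ball z r))
    (F0 F1star F1 : ℝ → ℝ)
    (hne : F0 ≠ F1star)
    (β₀star : ℝ) (βstar : EuclideanSpace ℝ (Fin p)) (hβstar : βstar ≠ 0)
    (πstar : EuclideanSpace ℝ (Fin p) → ℝ)
    (hπstar : ∀ x, πstar x = (1 + Real.exp (-(β₀star + ∑ i, βstar i * x i)))⁻¹)
    (β₀ : ℝ) (β : EuclideanSpace ℝ (Fin p))
    (π : EuclideanSpace ℝ (Fin p) → ℝ)
    (hπ : ∀ x, π x = (1 + Real.exp (-(β₀ + ∑ i, β i * x i)))⁻¹)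
    (heq : JointEq m F0 πstar F1star π F1) :
    (∀ᵐ x ∂m, π x = πstar x) ∧ F1 = F1star := by
  have hπ' : π = fun x => Real.sigmoid (β₀ + ⟪β, x⟫) :=
    funext fun x => by rw [hπ, EuclideanSpace.sum_mul_eq_inner]; rfl
  have hπstar' : πstar = fun x => Real.sigmoid (β₀star + ⟪βstar, x⟫) :=
    funext fun x => by rw [hπstar, EuclideanSpace.sum_mul_eq_inner]; rfl
  have hae := heq.ae_mul_sub_eq (hπstar' ▸ Real.integrable_sigmoid_comp (by fun_prop))
    (hπ' ▸ Real.integrable_sigmoid_comp (by fun_prop))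
  have hon : ∀ y, Set.EqOn (fun x => πstar x * (F1star y - F0 y)) (fun x => π x * (F1 y - F0 y))
      𝒳' := fun y =>
    eqOn_of_ae_eq_of_measure_ball_pos h𝒳open hmball (by rw [hπstar']; fun_prop)
      (by rw [hπ']; fun_prop) (hae y)
  obtain ⟨y₀, hy₀⟩ := Function.ne_iff.mp hne
  have hc : F1star y₀ - F0 y₀ ≠ 0 := sub_ne_zero.mpr (Ne.symm hy₀)
  have hc_eq : F1star y₀ - F0 y₀ = F1 y₀ - F0 y₀ :=
    Real.eq_of_mul_sigmoid_inner_eqOn h𝒳open h𝒳ne hc hβstar fun x hx => by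
      simpa only [hπ', hπstar', mul_comm] using hon y₀ hx
  have hπ_eq : ∀ x, πstar x * (F1star y₀ - F0 y₀) = π x * (F1 y₀ - F0 y₀) → π x = πstar x :=
    fun x hx => (mul_right_cancel₀ hc (hc_eq ▸ hx)).symm
  obtain ⟨x₀, hx₀⟩ := h𝒳ne
  refine ⟨by filter_upwards [hae y₀] with x hx using hπ_eq x hx, funext fun y => ?_⟩
  have hy : πstar x₀ * (F1star y - F0 y) = πstar x₀ * (F1 y - F0 y) :=
    calc πstar x₀ * (F1star y - F0 y) = π x₀ * (F1 y - F0 y) := hon y hx₀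
      _ = πstar x₀ * (F1 y - F0 y) := by rw [hπ_eq x₀ (hon y₀ hx₀)]
  have hpos : 0 < πstar x₀ := hπstar' ▸ Real.sigmoid_pos _
  linarith [mul_left_cancel₀ hpos.ne' hy]

/-- Lemma `ide`, logistic case: in the covariate model with logistic
mixing class and `ℱ = ℱ_Gauss` or `ℱ_↓`, if `m` charges every open ball contained in a
nonempty open set `𝒳'`, `F₀ ≠ F₁*` and `β* ≠ 0`, then `P_{(π*,F₁*)}` is identifiable. -/
theorem stmt_4 {p : ℕ} (m : Measure (EuclideanSpace ℝ (Fin p)))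
    (hm : IsProbabilityMeasure m)
    (𝒳' : Set (EuclideanSpace ℝ (Fin p))) (h𝒳ne : 𝒳'.Nonempty) (h𝒳open : IsOpen 𝒳')
    (hmball : ∀ (z : EuclideanSpace ℝ (Fin p)) (r : ℝ), 0 < r →
      Metric.ball z r ⊆ 𝒳' → 0 < m (Metric.ball z r))
    (F0 F1star F1 : ℝ → ℝ)
    (hclass : (IsGaussMixCDF F1star ∧ IsGaussMixCDF F1) ∨
      (IsDecDensityDF F1star ∧ IsDecDensityDF F1))
    (hne : F0 ≠ F1star)
    (β₀star : ℝ) (βstar : EuclideanSpace ℝ (Fin p)) (hβstar : βstar ≠ 0)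
    (πstar : EuclideanSpace ℝ (Fin p) → ℝ)
    (hπstar : ∀ x, πstar x = (1 + Real.exp (-(β₀star + ∑ i, βstar i * x i)))⁻¹)
    (β₀ : ℝ) (β : EuclideanSpace ℝ (Fin p))
    (π : EuclideanSpace ℝ (Fin p) → ℝ)
    (hπ : ∀ x, π x = (1 + Real.exp (-(β₀ + ∑ i, β i * x i)))⁻¹)
    (heq : JointEq m F0 πstar F1star π F1) :
    (∀ᵐ x ∂m, π x = πstar x) ∧ F1 = F1star :=
  stmt_4_general m hm 𝒳' h𝒳ne h𝒳open hmball F0 F1star F1 hne β₀star βstar hβstar πstar hπstar β₀ β π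
    hπ heq

end
end

section
/- Let m be a probability measure on ℝ supported on {0,1}, F₀ = Φ the standard normal distribution function, ℱ = ℱ_Gauss, and Π the logistic class {x ↦ (1 + exp(β₀ + β₁x))⁻¹ : β₀, β₁ ∈ ℝ}. Let π* ∈ Π and F₁* ∈ ℱ_Gauss with F₁* ≠ Φ. Then there exist c ∈ (0,1) and (β̃₀, β̃₁) ∈ ℝ² such that the logistic function π̃(x) = (1 + exp(β̃₀ + β̃₁x))⁻¹ satisfies π̃(x) = π*(x)/(1 − c) for x ∈ {0,1}; moreover F̃₁ := cΦ + (1 − c)F₁* belongs to ℱ_Gauss, (π̃, F̃₁) differs from (π*, F₁*), and P_{(π̃,F̃₁)} = P_{(π*,F₁*)}. Hence the model is not identifiable. -/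
/-!
With a covariate supported on `{0, 1}` the prior `π*` only matters through its two values
`π*(0), π*(1) ∈ (0, 1)`, and any two such values are attained by a logistic curve. Choosing
`c ∈ (0, 1)` small enough that `π*(x) / (1 - c) < 1` at both points, relabelling a fraction `c`
of the non-null component as null gives `π̃ = π* / (1 - c)` and `F̃₁ = cΦ + (1 - c)F₁*`, which
leaves every mixture `π F₁ + (1 - π) Φ` unchanged; `F̃₁` stays a Gaussian location mixture by
convexity, and differs from `F₁*` because `F₁* ≠ Φ`.
-/

open MeasureTheory ProbabilityTheory

noncomputable section

open Real Set

lemma stdNormalCDF_monotone : Monotone stdNormalCDF := fun _ _ hab =>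
  ENNReal.toReal_mono (measure_ne_top _ _) (measure_mono (Iic_subset_Iic.2 hab))

lemma stdNormalCDF_nonneg (y : ℝ) : 0 ≤ stdNormalCDF y := ENNReal.toReal_nonneg

lemma stdNormalCDF_le_one (y : ℝ) : stdNormalCDF y ≤ 1 :=
  ENNReal.toReal_le_of_le_ofReal zero_le_one (by simpa using prob_le_one)

lemma integrable_stdNormalCDF_sub (y : ℝ) (G : Measure ℝ) [IsFiniteMeasure G] :
    Integrable (fun u => stdNormalCDF (y - u)) G := by
  refine (integrable_const (1 : ℝ)).mono' ?_ (Filter.Eventually.of_forall fun u => ?_)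
  · exact (stdNormalCDF_monotone.measurable.comp
      (measurable_const.sub measurable_id)).aestronglyMeasurable
  · rw [Real.norm_eq_abs, abs_of_nonneg (stdNormalCDF_nonneg _)]
    exact stdNormalCDF_le_one _

lemma isGaussMixCDF_stdNormalCDF : IsGaussMixCDF stdNormalCDF :=
  ⟨Measure.dirac 0, inferInstance, fun y => by rw [integral_dirac, sub_zero]⟩

lemma IsGaussMixCDF.convexComb {F F' : ℝ → ℝ} (hF : IsGaussMixCDF F) (hF' : IsGaussMixCDF F')
    {a b : ℝ} (ha : 0 ≤ a) (hb : 0 ≤ b) (hab : a + b = 1) :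
    IsGaussMixCDF (fun y => a * F y + b * F' y) := by
  obtain ⟨G, hG, hGF⟩ := hF
  obtain ⟨G', hG', hGF'⟩ := hF'
  refine ⟨ENNReal.ofReal a • G + ENNReal.ofReal b • G', ⟨?_⟩, fun y => ?_⟩
  · simp [← ENNReal.ofReal_add ha hb, hab]
  · beta_reduce
    rw [hGF y, hGF' y,
      integral_add_measure ((integrable_stdNormalCDF_sub y G).smul_measure ENNReal.ofReal_ne_top)
        ((integrable_stdNormalCDF_sub y G').smul_measure ENNReal.ofReal_ne_top),
      integral_smul_measure, integral_smul_measure, ENNReal.toReal_ofReal ha,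
      ENNReal.toReal_ofReal hb, smul_eq_mul, smul_eq_mul]

lemma convexComb_ne_self {F₀ F : ℝ → ℝ} (hF : F ≠ F₀) {c : ℝ} (hc : c ≠ 0) :
    (fun y => c * F₀ y + (1 - c) * F y) ≠ F := by
  refine fun h => hF (funext fun y => ?_)
  have hy := congrFun h y
  exact mul_left_cancel₀ hc (by linarith : c * F y = c * F₀ y)

lemma inv_one_add_exp_mem_Ioo (t : ℝ) : (1 + exp t)⁻¹ ∈ Ioo (0 : ℝ) 1 :=
  ⟨by positivity, inv_lt_one_of_one_lt₀ (lt_add_of_pos_right 1 (exp_pos t))⟩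

lemma inv_one_add_exp_log_inv_sub_one {p : ℝ} (hp : p ∈ Ioo (0 : ℝ) 1) :
    (1 + exp (log (p⁻¹ - 1)))⁻¹ = p := by
  rw [exp_log (sub_pos.2 (one_lt_inv₀ hp.1 |>.2 hp.2)), add_sub_cancel, inv_inv]

lemma exists_inv_one_add_exp_eq {x₀ x₁ p₀ p₁ : ℝ} (hx : x₀ ≠ x₁)
    (hp₀ : p₀ ∈ Ioo (0 : ℝ) 1) (hp₁ : p₁ ∈ Ioo (0 : ℝ) 1) :
    ∃ β₀ β₁ : ℝ, (1 + exp (β₀ + β₁ * x₀))⁻¹ = p₀ ∧ (1 + exp (β₀ + β₁ * x₁))⁻¹ = p₁ := by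
  set L₀ := log (p₀⁻¹ - 1)
  set L₁ := log (p₁⁻¹ - 1)
  set β₁ := (L₁ - L₀) / (x₁ - x₀)
  have hx' : x₁ - x₀ ≠ 0 := sub_ne_zero.2 hx.symm
  refine ⟨L₀ - β₁ * x₀, β₁, ?_, ?_⟩
  · rw [sub_add_cancel, inv_one_add_exp_log_inv_sub_one hp₀]
  · have : L₀ - β₁ * x₀ + β₁ * x₁ = L₁ := by simp only [β₁]; field_simp; ring
    rw [this, inv_one_add_exp_log_inv_sub_one hp₁]

lemma exists_mem_Ioo_lt_one_sub {a b : ℝ} (ha : a < 1) (hb : b < 1) :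
    ∃ c ∈ Ioo (0 : ℝ) 1, a < 1 - c ∧ b < 1 - c := by
  have h := max_lt ha hb
  refine ⟨min (1 / 2) ((1 - max a b) / 2), ⟨lt_min (by norm_num) (by linarith), ?_⟩, ?_, ?_⟩
  · linarith [min_le_left (1 / 2 : ℝ) ((1 - max a b) / 2)]
  all_goals linarith [min_le_right (1 / 2 : ℝ) ((1 - max a b) / 2), le_max_left a b,
    le_max_right a b]

/-- A fraction `c` of the non-null component can be relabelled as null: pointwise
`π₂ (c F₀ + (1 - c) F₁) + (1 - π₂) F₀ = π₁ F₁ + (1 - π₁) F₀` when `π₂ (1 - c) = π₁`. -/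
lemma jointEq_of_ae_eq_div {α : Type*} [MeasurableSpace α] {m : Measure α} {F₀ F₁ : ℝ → ℝ}
    {π₁ π₂ : α → ℝ} {c : ℝ} (hc : c ≠ 1) (hπ : ∀ᵐ x ∂m, π₂ x = π₁ x / (1 - c)) :
    JointEq m F₀ π₁ F₁ π₂ (fun y => c * F₀ y + (1 - c) * F₁ y) := by
  intro A _ y
  refine integral_congr_ae (ae_restrict_of_ae ?_)
  filter_upwards [hπ] with x hx
  have : 1 - c ≠ 0 := sub_ne_zero.2 hc.symm
  rw [hx]
  field_simp
  ring

theorem stmt_7_general (m : Measure ℝ)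
    (hsupp : m ({0, 1} : Set ℝ)ᶜ = 0)
    (β₀star β₁star : ℝ) (πstar : ℝ → ℝ)
    (hπstar : ∀ x, πstar x = (1 + Real.exp (β₀star + β₁star * x))⁻¹)
    (F1star : ℝ → ℝ) (hF1 : IsGaussMixCDF F1star) (hne : F1star ≠ stdNormalCDF) :
    ∃ c ∈ Set.Ioo (0:ℝ) 1, ∃ βt₀ βt₁ : ℝ,
      (∀ x ∈ ({0, 1} : Set ℝ),
        (1 + Real.exp (βt₀ + βt₁ * x))⁻¹ = πstar x / (1 - c)) ∧
      IsGaussMixCDF (fun y => c * stdNormalCDF y + (1 - c) * F1star y) ∧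
      (((fun x => (1 + Real.exp (βt₀ + βt₁ * x))⁻¹ : ℝ → ℝ),
          (fun y => c * stdNormalCDF y + (1 - c) * F1star y : ℝ → ℝ))
        ≠ (πstar, F1star)) ∧
      JointEq m stdNormalCDF πstar F1star
        (fun x => (1 + Real.exp (βt₀ + βt₁ * x))⁻¹)
        (fun y => c * stdNormalCDF y + (1 - c) * F1star y) := by
  have hπ : ∀ x, πstar x ∈ Ioo (0 : ℝ) 1 := fun x => hπstar x ▸ inv_one_add_exp_mem_Ioo _
  obtain ⟨c, hc, hc₀, hc₁⟩ := exists_mem_Ioo_lt_one_sub (hπ 0).2 (hπ 1).2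
  have hpos : 0 < 1 - c := sub_pos.2 hc.2
  have hdiv : ∀ x, πstar x < 1 - c → πstar x / (1 - c) ∈ Ioo (0 : ℝ) 1 := fun x hx =>
    ⟨div_pos (hπ x).1 hpos, (div_lt_one hpos).2 hx⟩
  obtain ⟨βt₀, βt₁, h₀, h₁⟩ := exists_inv_one_add_exp_eq zero_ne_one (hdiv 0 hc₀) (hdiv 1 hc₁)
  have hπt : ∀ x ∈ ({0, 1} : Set ℝ), (1 + exp (βt₀ + βt₁ * x))⁻¹ = πstar x / (1 - c) := by
    rintro x (rfl | rfl)
    exacts [h₀, h₁]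
  refine ⟨c, hc, βt₀, βt₁, hπt, ?_, ?_, ?_⟩
  · exact isGaussMixCDF_stdNormalCDF.convexComb hF1 hc.1.le hpos.le (add_sub_cancel c 1)
  · exact fun h => convexComb_ne_self hne hc.1.ne' (congrArg Prod.snd h)
  · exact jointEq_of_ae_eq_div hc.2.ne (by filter_upwards [mem_ae_iff.2 hsupp] using hπt)

/-- Remark `logitnoniden`: with a binary covariate supported on `{0,1}`,
the logistic-Gaussian-mixture model is not identifiable: for any logistic `π*` and any
`F₁* ∈ ℱ_Gauss` with `F₁* ≠ Φ`, there exist `c ∈ (0,1)` and logistic parameters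
`(β̃₀, β̃₁)` such that `π̃ = π*/(1-c)` on `{0,1}`, `F̃₁ := cΦ + (1-c)F₁* ∈ ℱ_Gauss`,
`(π̃, F̃₁) ≠ (π*, F₁*)`, and the joint distributions coincide. -/
theorem stmt_7 (m : Measure ℝ) [IsProbabilityMeasure m]
    (hsupp : m ({0, 1} : Set ℝ)ᶜ = 0)
    (β₀star β₁star : ℝ) (πstar : ℝ → ℝ)
    (hπstar : ∀ x, πstar x = (1 + Real.exp (β₀star + β₁star * x))⁻¹)
    (F1star : ℝ → ℝ) (hF1 : IsGaussMixCDF F1star) (hne : F1star ≠ stdNormalCDF) :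
    ∃ c ∈ Set.Ioo (0:ℝ) 1, ∃ βt₀ βt₁ : ℝ,
      (∀ x ∈ ({0, 1} : Set ℝ),
        (1 + Real.exp (βt₀ + βt₁ * x))⁻¹ = πstar x / (1 - c)) ∧
      IsGaussMixCDF (fun y => c * stdNormalCDF y + (1 - c) * F1star y) ∧
      (((fun x => (1 + Real.exp (βt₀ + βt₁ * x))⁻¹ : ℝ → ℝ),
          (fun y => c * stdNormalCDF y + (1 - c) * F1star y : ℝ → ℝ))
        ≠ (πstar, F1star)) ∧
      JointEq m stdNormalCDF πstar F1star
        (fun x => (1 + Real.exp (βt₀ + βt₁ * x))⁻¹)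
        (fun y => c * stdNormalCDF y + (1 - c) * F1star y) :=
  stmt_7_general m hsupp β₀star β₁star πstar hπstar F1star hF1 hne

end
end

section
/- Let Θ ⊂ ℝ^{p+1} be a set with ‖θ‖_∞ ≤ K for all θ ∈ Θ, and let g : ℝ → [0,1] be differentiable with |g'(z)| ≤ c₁ for all z. For θ = (β, μ) ∈ Θ define m_θ(x,y) := −(y − μ g(xᵀβ))². Then for all θ₁, θ₂ ∈ Θ and all (x,y) ∈ ℝ^p × ℝ: |m_{θ₁}(x,y) − m_{θ₂}(x,y)| ≤ m̃(x,y)‖θ₁ − θ₂‖, where m̃(x,y) := 2(|y| + K)(1 + K c₁ ‖x‖). Moreover, if E Y⁴ < ∞ and E‖X‖⁴ < ∞, then E[m̃(X,Y)²] < ∞. -/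
/-! Write `aᵢ = μᵢ g(xᵀβᵢ)`. Then `m_{θ₁} - m_{θ₂} = (a₁ - a₂)(2y - a₁ - a₂)`, and the second factor is
at most `2(|y| + K)` because `0 ≤ g ≤ 1` and `|μᵢ| ≤ K`. Splitting
`a₁ - a₂ = (μ₁ - μ₂) g(xᵀβ₁) + μ₂ (g(xᵀβ₁) - g(xᵀβ₂))`, the mean value theorem and Cauchy–Schwarz bound
the first factor by `(1 + K c₁ ‖x‖) ‖θ₁ - θ₂‖`.

For the moment bound, `m̃(X,Y)` is the product of affine functions of `|Y|` and `‖X‖`; since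
`(ab)² ≤ (a⁴ + b⁴)/2` and `(u + v)⁴ ≤ 8(u⁴ + v⁴)`, its square is dominated by an integrable
combination of `1`, `Y⁴` and `‖X‖⁴`. -/

open MeasureTheory

noncomputable section

/-- The linear predictor `xᵀβ`, where `β` consists of the first `p` coordinates of
`θ ∈ ℝ^{p+1}`. -/
def dotX {p : ℕ} (x : EuclideanSpace ℝ (Fin p)) (θ : EuclideanSpace ℝ (Fin (p + 1))) : ℝ :=
  ∑ i : Fin p, x i * θ i.castSucc

/-- The coordinate `μ`, the last coordinate of `θ = (β, μ) ∈ ℝ^{p+1}`. -/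
def muOf {p : ℕ} (θ : EuclideanSpace ℝ (Fin (p + 1))) : ℝ := θ (Fin.last p)

/-- The criterion function `m_θ(x,y) = -(y - μ g(xᵀβ))²`. -/
def mFun {p : ℕ} (g : ℝ → ℝ) (θ : EuclideanSpace ℝ (Fin (p + 1)))
    (x : EuclideanSpace ℝ (Fin p)) (y : ℝ) : ℝ :=
  -(y - muOf θ * g (dotX x θ)) ^ 2

/-- The envelope function `m̃(x,y) = 2(|y| + K)(1 + K c₁ ‖x‖)`. -/
def mTilde {p : ℕ} (K c₁ : ℝ) (x : EuclideanSpace ℝ (Fin p)) (y : ℝ) : ℝ :=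
  2 * (|y| + K) * (1 + K * c₁ * ‖x‖)

open RealInnerProductSpace

lemma EuclideanSpace.abs_apply_le_norm {ι : Type*} [Fintype ι] (v : EuclideanSpace ℝ ι) (i : ι) :
    |v i| ≤ ‖v‖ := by
  simpa using PiLp.norm_apply_le v i

lemma EuclideanSpace.norm_castSucc_le {n : ℕ} (θ : EuclideanSpace ℝ (Fin (n + 1))) :
    ‖WithLp.toLp 2 (fun i : Fin n => θ i.castSucc)‖ ≤ ‖θ‖ := by
  rw [EuclideanSpace.norm_eq, EuclideanSpace.norm_eq, Fin.sum_univ_castSucc]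
  gcongr
  simp only [le_add_iff_nonneg_right]
  positivity

lemma dotX_eq_inner {p : ℕ} (x : EuclideanSpace ℝ (Fin p)) (θ : EuclideanSpace ℝ (Fin (p + 1))) :
    dotX x θ = ⟪x, WithLp.toLp 2 (fun i : Fin p => θ i.castSucc)⟫ := by
  simp [dotX, PiLp.inner_apply, mul_comm]

lemma abs_dotX_le {p : ℕ} (x : EuclideanSpace ℝ (Fin p)) (θ : EuclideanSpace ℝ (Fin (p + 1))) :
    |dotX x θ| ≤ ‖x‖ * ‖θ‖ := by
  rw [dotX_eq_inner]
  exact (abs_real_inner_le_norm _ _).trans (by gcongr; exact EuclideanSpace.norm_castSucc_le θ)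

lemma dotX_sub {p : ℕ} (x : EuclideanSpace ℝ (Fin p)) (θ₁ θ₂ : EuclideanSpace ℝ (Fin (p + 1))) :
    dotX x θ₁ - dotX x θ₂ = dotX x (θ₁ - θ₂) := by
  simp [dotX, mul_sub, Finset.sum_sub_distrib]

lemma abs_muOf_sub_le {p : ℕ} (θ₁ θ₂ : EuclideanSpace ℝ (Fin (p + 1))) :
    |muOf θ₁ - muOf θ₂| ≤ ‖θ₁ - θ₂‖ := by
  simpa [muOf] using EuclideanSpace.abs_apply_le_norm (θ₁ - θ₂) (Fin.last p)

lemma abs_sub_sq_sub_sub_sq_le {y a b K : ℝ} (ha : |a| ≤ K) (hb : |b| ≤ K) :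
    |(y - a) ^ 2 - (y - b) ^ 2| ≤ 2 * (|y| + K) * |a - b| := by
  have hy : |2 * y - a - b| ≤ 2 * (|y| + K) := by
    rw [abs_le]
    constructor <;> linarith [neg_abs_le y, le_abs_self y, abs_le.1 ha, abs_le.1 hb]
  rw [show (y - a) ^ 2 - (y - b) ^ 2 = (2 * y - a - b) * (b - a) by ring, abs_mul, abs_sub_comm b a]
  gcongr

section MFun

variable {p : ℕ} {g : ℝ → ℝ} {K c₁ : ℝ}

lemma abs_muOf_mul_sub_le (hg : ∀ z, |g z| ≤ 1) (hlip : ∀ s t, |g s - g t| ≤ c₁ * |s - t|)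
    {θ₁ θ₂ : EuclideanSpace ℝ (Fin (p + 1))} (hμ₂ : |muOf θ₂| ≤ K)
    (x : EuclideanSpace ℝ (Fin p)) :
    |muOf θ₁ * g (dotX x θ₁) - muOf θ₂ * g (dotX x θ₂)| ≤ (1 + K * c₁ * ‖x‖) * ‖θ₁ - θ₂‖ := by
  have hK : 0 ≤ K := (abs_nonneg _).trans hμ₂
  have hc₁ : 0 ≤ c₁ := by simpa using (abs_nonneg _).trans (hlip 1 0)
  have hgx : |g (dotX x θ₁) - g (dotX x θ₂)| ≤ c₁ * (‖x‖ * ‖θ₁ - θ₂‖) :=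
    calc _ ≤ c₁ * |dotX x θ₁ - dotX x θ₂| := hlip _ _
      _ ≤ _ := by rw [dotX_sub]; gcongr; exact abs_dotX_le x _
  calc |muOf θ₁ * g (dotX x θ₁) - muOf θ₂ * g (dotX x θ₂)|
      = |(muOf θ₁ - muOf θ₂) * g (dotX x θ₁) + muOf θ₂ * (g (dotX x θ₁) - g (dotX x θ₂))| := by
        congr 1; ring
    _ ≤ |muOf θ₁ - muOf θ₂| * |g (dotX x θ₁)| + |muOf θ₂| * |g (dotX x θ₁) - g (dotX x θ₂)| := by
        rw [← abs_mul, ← abs_mul]; exact abs_add_le _ _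
    _ ≤ ‖θ₁ - θ₂‖ * 1 + K * (c₁ * (‖x‖ * ‖θ₁ - θ₂‖)) := by
        gcongr
        exacts [abs_muOf_sub_le θ₁ θ₂, hg _]
    _ = (1 + K * c₁ * ‖x‖) * ‖θ₁ - θ₂‖ := by ring

lemma abs_mFun_sub_le (hg : ∀ z, |g z| ≤ 1) (hlip : ∀ s t, |g s - g t| ≤ c₁ * |s - t|)
    {θ₁ θ₂ : EuclideanSpace ℝ (Fin (p + 1))} (hμ₁ : |muOf θ₁| ≤ K)
    (hμ₂ : |muOf θ₂| ≤ K) (x : EuclideanSpace ℝ (Fin p)) (y : ℝ) :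
    |mFun g θ₁ x y - mFun g θ₂ x y| ≤ mTilde K c₁ x y * ‖θ₁ - θ₂‖ := by
  have hK : 0 ≤ K := (abs_nonneg _).trans hμ₁
  have hmg {θ : EuclideanSpace ℝ (Fin (p + 1))} (hμ : |muOf θ| ≤ K) :
      |muOf θ * g (dotX x θ)| ≤ K := by
    simpa [abs_mul] using mul_le_mul hμ (hg _) (abs_nonneg _) hK
  calc |mFun g θ₁ x y - mFun g θ₂ x y|
      = |(y - muOf θ₂ * g (dotX x θ₂)) ^ 2 - (y - muOf θ₁ * g (dotX x θ₁)) ^ 2| := by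
        rw [mFun, mFun, neg_sub_neg]
    _ ≤ 2 * (|y| + K) * |muOf θ₂ * g (dotX x θ₂) - muOf θ₁ * g (dotX x θ₁)| :=
        abs_sub_sq_sub_sub_sq_le (hmg hμ₂) (hmg hμ₁)
    _ ≤ 2 * (|y| + K) * ((1 + K * c₁ * ‖x‖) * ‖θ₁ - θ₂‖) := by
        rw [abs_sub_comm]
        gcongr
        exact abs_muOf_mul_sub_le hg hlip hμ₂ x
    _ = mTilde K c₁ x y * ‖θ₁ - θ₂‖ := by rw [mTilde]; ring

end MFun

section FourthMoments

variable {α : Type*} [MeasurableSpace α] {μ : Measure α}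

lemma integrable_sq_mul_of_integrable_pow_four {f h : α → ℝ} (hf : AEStronglyMeasurable f μ)
    (hh : AEStronglyMeasurable h μ) (hf4 : Integrable (fun a => f a ^ 4) μ)
    (hh4 : Integrable (fun a => h a ^ 4) μ) :
    Integrable (fun a => (f a * h a) ^ 2) μ := by
  refine ((hf4.add hh4).div_const 2).mono' ((hf.mul hh).pow 2) (ae_of_all _ fun a => ?_)
  rw [Real.norm_of_nonneg (by positivity), Pi.add_apply]
  nlinarith [sq_nonneg (f a ^ 2 - h a ^ 2)]

lemma integrable_const_add_mul_pow_four [IsFiniteMeasure μ] {f : α → ℝ}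
    (hf : AEStronglyMeasurable f μ) (hf4 : Integrable (fun a => f a ^ 4) μ) (c d : ℝ) :
    Integrable (fun a => (c + d * f a) ^ 4) μ := by
  refine (((integrable_const (c ^ 4)).add (hf4.const_mul (d ^ 4))).const_mul 8).mono'
    ((aestronglyMeasurable_const.add (aestronglyMeasurable_const.mul hf)).pow 4)
    (ae_of_all _ fun a => ?_)
  have add_pow_four_le (u v : ℝ) : (u + v) ^ 4 ≤ 8 * (u ^ 4 + v ^ 4) := by
    nlinarith [sq_nonneg (u - v), sq_nonneg (u + v), sq_nonneg (u ^ 2 - v ^ 2)]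
  rw [Real.norm_of_nonneg (by positivity), Pi.add_apply, ← mul_pow]
  exact add_pow_four_le c (d * f a)

end FourthMoments

lemma integrable_mTilde_sq {Ω : Type*} [MeasurableSpace Ω] {P : Measure Ω} [IsFiniteMeasure P]
    {p : ℕ} (K c₁ : ℝ) {X : Ω → EuclideanSpace ℝ (Fin p)} {Y : Ω → ℝ}
    (hX : AEStronglyMeasurable X P) (hY : AEStronglyMeasurable Y P)
    (hY4 : Integrable (fun ω => Y ω ^ 4) P) (hX4 : Integrable (fun ω => ‖X ω‖ ^ 4) P) :
    Integrable (fun ω => mTilde K c₁ (X ω) (Y ω) ^ 2) P := by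
  have hY4' : Integrable (fun ω => |Y ω| ^ 4) P := by
    simpa only [Even.pow_abs (by decide : Even 4)] using hY4
  have hprod := integrable_sq_mul_of_integrable_pow_four
    (aestronglyMeasurable_const.add (aestronglyMeasurable_const.mul hY.norm))
    (aestronglyMeasurable_const.add (aestronglyMeasurable_const.mul hX.norm))
    (integrable_const_add_mul_pow_four hY.norm hY4' (2 * K) 2)
    (integrable_const_add_mul_pow_four hX.norm hX4 1 (K * c₁))
  convert hprod using 3 with ω
  simp only [mTilde, Pi.add_apply, Pi.mul_apply, Real.norm_eq_abs]
  ring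

/-- Lipschitz property `con2` in the proof of Theorem `cor:Mar-2`:
on a sup-norm bounded parameter set `Θ`, `θ ↦ m_θ(x,y)` is Lipschitz with (random)
constant `m̃(x,y) = 2(|y|+K)(1+Kc₁‖x‖)`; moreover `m̃(X,Y)` is square-integrable whenever
`Y` and `‖X‖` have finite fourth moments. -/
theorem stmt_18 {p : ℕ} (K c₁ : ℝ)
    (Θ : Set (EuclideanSpace ℝ (Fin (p + 1))))
    (hΘ : ∀ θ ∈ Θ, ∀ i, |θ i| ≤ K)
    (g : ℝ → ℝ) (hg01 : ∀ z, g z ∈ Set.Icc (0:ℝ) 1)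
    (hgdiff : Differentiable ℝ g) (hgd : ∀ z, |deriv g z| ≤ c₁) :
    (∀ θ₁ ∈ Θ, ∀ θ₂ ∈ Θ, ∀ (x : EuclideanSpace ℝ (Fin p)) (y : ℝ),
      |mFun g θ₁ x y - mFun g θ₂ x y| ≤ mTilde K c₁ x y * ‖θ₁ - θ₂‖) ∧
    ∀ (Ω : Type) (_ : MeasurableSpace Ω) (P : Measure Ω),
      IsProbabilityMeasure P →
      ∀ (X : Ω → EuclideanSpace ℝ (Fin p)) (Y : Ω → ℝ),
        Measurable X → Measurable Y →
        Integrable (fun ω => Y ω ^ 4) P →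
        Integrable (fun ω => ‖X ω‖ ^ 4) P →
        Integrable (fun ω => mTilde K c₁ (X ω) (Y ω) ^ 2) P := by
  have hg : ∀ z, |g z| ≤ 1 := fun z => abs_le.2 ⟨by linarith [(hg01 z).1], (hg01 z).2⟩
  have hlip : ∀ s t, |g s - g t| ≤ c₁ * |s - t| := fun s t => by
    simpa using convex_univ.norm_image_sub_le_of_norm_deriv_le (fun z _ => hgdiff z)
      (fun z _ => hgd z) (Set.mem_univ t) (Set.mem_univ s)
  refine ⟨fun θ₁ h₁ θ₂ h₂ x y => abs_mFun_sub_le hg hlip (hΘ θ₁ h₁ _) (hΘ θ₂ h₂ _) x y, ?_⟩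
  intro Ω _ P _ X Y hX hY hY4 hX4
  exact integrable_mTilde_sq K c₁ hX.aestronglyMeasurable hY.aestronglyMeasurable hY4 hX4

end
end
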